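/- With the combinatorial setup below, if p = 3 and d ≤ 6, then κ(γ) < 1 for every γ ∈ Γ ∪ Δ; in particular κ(π) < 1. -/

import Mathlib

namespace PaperPurity

variable {r : ℕ}

/-- `J₊ = {(i,j) : j ≤ c < i}` (translated to 0-based indexing on `Fin r`). -/
def Jp (c : ℕ) : Set (Fin r × Fin r) := {q | q.2.val < c ∧ c ≤ q.1.val}

/-- `J₀ = {(i,j) : i,j ≤ c or i,j > c}` (0-based). -/
def Jz (c : ℕ) : Set (Fin r × Fin r) :=
  {q | (q.1.val < c ∧ q.2.val < c) ∨ (c ≤ q.1.val ∧ c ≤ q.2.val)}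

/-- `J₋ = {(i,j) : i ≤ c < j}` (0-based). -/
def Jm (c : ℕ) : Set (Fin r × Fin r) := {q | q.1.val < c ∧ c ≤ q.2.val}

/-- Apply `π^s` to both entries of a pair. -/
def iter (π : Equiv.Perm (Fin r)) (s : ℕ) (q : Fin r × Fin r) : Fin r × Fin r :=
  ((π ^ s) q.1, (π ^ s) q.2)

/-- The π-order `ν(i,j)`: the smallest positive `ν` with `(π^ν i, π^ν j) ∈ J₊ ∪ J₋`.
On `J₀,₀` this `sInf` also computes the extended π-order `ν(i,j) - s`. -/
noncomputable def nu (π : Equiv.Perm (Fin r)) (c : ℕ) (q : Fin r × Fin r) : ℕ :=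
  sInf {ν : ℕ | 0 < ν ∧ iter π ν q ∈ Jp c ∪ Jm c}

/-- `J₋,₁`. -/
def Jm1 (π : Equiv.Perm (Fin r)) (c : ℕ) : Set (Fin r × Fin r) :=
  {q | q ∈ Jm c ∧ iter π (nu π c q) q ∈ Jp c}

/-- `J₊,₁`. -/
def Jp1 (π : Equiv.Perm (Fin r)) (c : ℕ) : Set (Fin r × Fin r) :=
  {q' | ∃ q ∈ Jm1 π c, q' = iter π (nu π c q) q}

/-- `J₊,₂ = J₊ \ J₊,₁`. -/
def Jp2 (π : Equiv.Perm (Fin r)) (c : ℕ) : Set (Fin r × Fin r) := Jp c \ Jp1 π c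

/-- `J₀,₀`. -/
def Jz0 (π : Equiv.Perm (Fin r)) (c : ℕ) : Set (Fin r × Fin r) :=
  {q' | ∃ q ∈ Jm1 π c, ∃ s : ℕ, 1 ≤ s ∧ s ≤ nu π c q - 1 ∧ q' = iter π s q}

/-- The π-level `η`. -/
noncomputable def eta (π : Equiv.Perm (Fin r)) (c : ℕ) (q' : Fin r × Fin r) : ℕ :=
  sInf {s : ℕ | ∃ q ∈ Jm1 π c, s ≤ nu π c q ∧ q' = iter π s q}

/-- Membership in `Γ` for the tuple `(γ 1, …, γ s)`. -/
def inGamma (π : Equiv.Perm (Fin r)) (c s : ℕ) (γ : ℕ → Fin r) : Prop :=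
  2 ≤ s ∧ (∀ ℓ : ℕ, 1 ≤ ℓ → ℓ ≤ s - 2 → (γ ℓ, γ (ℓ + 1)) ∈ Jz0 π c) ∧
    (γ (s - 1), γ s) ∈ Jp2 π c

/-- Membership in `Δ` for the tuple `(γ 1, …, γ s)`. -/
def inDelta (π : Equiv.Perm (Fin r)) (c s : ℕ) (γ : ℕ → Fin r) : Prop :=
  3 ≤ s ∧ inGamma π c (s - 1) γ ∧ (γ (s - 1), γ s) ∈ Jz0 π c

/-- `n_t(γ)`. -/
noncomputable def nCount (π : Equiv.Perm (Fin r)) (c s : ℕ) (γ : ℕ → Fin r) (t : ℕ) : ℕ :=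
  Set.ncard {ℓ : ℕ | 1 ≤ ℓ ∧ ℓ ≤ s - 1 ∧ (γ ℓ, γ (ℓ + 1)) ∈ Jz0 π c ∧
    nu π c (γ ℓ, γ (ℓ + 1)) = t}

/-- `κ(γ) = Σ_{t ≥ 1} n_t(γ) p^{-t} ∈ ℚ`. -/
noncomputable def kappa (p : ℕ) (π : Equiv.Perm (Fin r)) (c s : ℕ) (γ : ℕ → Fin r) : ℚ :=
  ∑ᶠ t : ℕ, if 1 ≤ t then (nCount π c s γ t : ℚ) / (p : ℚ) ^ t else 0

/-- Membership in `Γ₁`. -/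
def inGamma1 (π : Equiv.Perm (Fin r)) (c s : ℕ) (γ : ℕ → Fin r) : Prop :=
  inGamma π c s γ ∧ (γ 1, γ s) ∈ Jp1 π c ∧ (γ 2, γ s) ∉ Jp1 π c

/-- Membership in `Δ₁`. -/
def inDelta1 (π : Equiv.Perm (Fin r)) (c s : ℕ) (γ : ℕ → Fin r) : Prop :=
  inDelta π c s γ ∧ (γ 1, γ s) ∈ Jp1 π c ∧ (γ 2, γ s) ∉ Jp1 π c

/-- `κ(π) = max {κ(γ) : γ ∈ Γ₁ ∪ Δ₁}` (and `0` if `Γ₁ ∪ Δ₁ = ∅`); realized as a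
supremum in `ℝ` of the (finite) set of values together with `0`. -/
noncomputable def kappaPerm (p : ℕ) (π : Equiv.Perm (Fin r)) (c : ℕ) : ℝ :=
  sSup (insert (0 : ℝ) {x : ℝ | ∃ (s : ℕ) (γ : ℕ → Fin r),
    (inGamma1 π c s γ ∨ inDelta1 π c s γ) ∧ x = ((kappa p π c s γ : ℚ) : ℝ)})

/-- The `k`-span of the matrix units `E_{i,j}`, `(i,j) ∈ S`. -/
def spanUnits (k : Type*) [Field k] {r : ℕ} (S : Set (Fin r × Fin r)) :
    Submodule k (Matrix (Fin r) (Fin r) k) :=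
  Submodule.span k ((fun q : Fin r × Fin r => Matrix.single q.1 q.2 (1 : k)) '' S)

section AuxProof

open Finset

attribute [local instance] Classical.propDecidable

variable {r : ℕ}

private lemma iter_add' (π : Equiv.Perm (Fin r)) (a b : ℕ) (q : Fin r × Fin r) :
    iter π a (iter π b q) = iter π (a + b) q := by
  simp [iter, pow_add, Equiv.Perm.mul_apply]

/-- Structure of `Jz0` pairs. -/
private lemma jz0_struct (π : Equiv.Perm (Fin r)) (c : ℕ) {q' : Fin r × Fin r}
    (h : q' ∈ Jz0 π c) :
    1 ≤ nu π c q' ∧ iter π (nu π c q') q' ∈ Jp c ∧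
      (∀ u, 1 ≤ u → u < nu π c q' → iter π u q' ∈ Jz c) ∧ q' ∈ Jz c := by
  obtain ⟨q, hq, s₀, hs1, hs2, rfl⟩ := h
  obtain ⟨hqm, hqp⟩ := hq
  have hνpos : 1 ≤ nu π c q := by
    by_contra hn
    have h0 : nu π c q = 0 := by omega
    rw [h0] at hqp
    simp [iter, Jp, Jm] at hqp hqm
    omega
  have hν2 : s₀ + 1 ≤ nu π c q := by omega
  have hmidq : ∀ v, 1 ≤ v → v < nu π c q → iter π v q ∈ Jz c := by
    intro v h1 h2
    have hv : v ∉ {ν : ℕ | 0 < ν ∧ iter π ν q ∈ Jp c ∪ Jm c} := Nat.notMem_of_lt_sInf h2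
    simp only [Set.mem_setOf_eq, not_and, Set.mem_union, not_or] at hv
    have hv2 := hv h1
    simp only [Jp, Jm, Jz, Set.mem_setOf_eq, not_and, not_le, not_lt] at hv2 ⊢
    omega
  have hiter : ∀ u, iter π u (iter π s₀ q) = iter π (u + s₀) q := fun u => iter_add' π u s₀ q
  have hmem : (nu π c q - s₀) ∈ {ν : ℕ | 0 < ν ∧ iter π ν (iter π s₀ q) ∈ Jp c ∪ Jm c} := by
    refine ⟨by omega, ?_⟩
    rw [hiter]
    have he : nu π c q - s₀ + s₀ = nu π c q := by omega
    rw [he]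
    exact Or.inl hqp
  have hle : nu π c (iter π s₀ q) ≤ nu π c q - s₀ := Nat.sInf_le hmem
  have hmm : nu π c (iter π s₀ q) ∈ {ν : ℕ | 0 < ν ∧ iter π ν (iter π s₀ q) ∈ Jp c ∪ Jm c} :=
    Nat.sInf_mem ⟨_, hmem⟩
  obtain ⟨hpos, hPM⟩ := hmm
  have heq : nu π c (iter π s₀ q) = nu π c q - s₀ := by
    by_contra hne'
    have hlt : nu π c (iter π s₀ q) < nu π c q - s₀ := lt_of_le_of_ne hle hne'
    rw [hiter] at hPM
    have hz := hmidq (nu π c (iter π s₀ q) + s₀) (by omega) (by omega)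
    simp only [Jp, Jm, Jz, Set.mem_setOf_eq, Set.mem_union] at hPM hz
    omega
  refine ⟨hpos, ?_, ?_, ?_⟩
  · rw [heq, hiter]
    have he : nu π c q - s₀ + s₀ = nu π c q := by omega
    rw [he]; exact hqp
  · intro u h1 h2
    rw [hiter]
    exact hmidq _ (by omega) (by rw [heq] at h2; omega)
  · exact hmidq s₀ hs1 (by omega)

/-- Geometric tail bound. -/
private lemma geom_lt (t N : ℕ) : 2 * ∑ u ∈ Finset.Icc (t+1) N, (1/3 : ℚ)^u < (1/3)^t := by
  have hpow : ∀ M : ℕ, (0:ℚ) < (1/3)^M := fun M => pow_pos (by norm_num) M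
  rcases le_or_gt (t+1) N with hN | hN
  · have key : ∀ M, t ≤ M → ∑ u ∈ Finset.Icc (t+1) M, (1/3:ℚ)^u ≤ ((1/3)^t - (1/3)^M)/2 := by
      intro M hM
      induction M, hM using Nat.le_induction with
      | base => rw [Finset.Icc_eq_empty (by omega)]; simp
      | succ M hM ih =>
        rw [Finset.sum_Icc_succ_top (by omega)]
        have h3 : (1/3:ℚ)^(M+1) = (1/3)^M * (1/3) := pow_succ _ _
        have := hpow M
        linarith
    have := key N (by omega)
    have := hpow N
    have := hpow t
    linarith
  · rw [Finset.Icc_eq_empty (by omega)]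
    simpa using hpow t


/-- Potential function. -/
private noncomputable def phi (π : Equiv.Perm (Fin r)) (c N : ℕ) (z : Fin r) : ℚ :=
  ∑ u ∈ Finset.Icc 1 N, if ((π ^ u) z).val < c then (1/3 : ℚ)^u else 0

private lemma phi_lt (π : Equiv.Perm (Fin r)) (c N : ℕ) {x y : Fin r} (t : ℕ)
    (ht1 : 1 ≤ t) (htN : t ≤ N)
    (hmid : ∀ u, 1 ≤ u → u < t → (((π^u) x).val < c ↔ ((π^u) y).val < c))
    (hTx : ¬ ((π^t) x).val < c) (hTy : ((π^t) y).val < c) :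
    phi π c N x < phi π c N y := by
  have hIcc : Finset.Icc 1 N = Finset.Ioc 0 N := by rw [← Finset.Icc_add_one_left_eq_Ioc]; rfl
  have hsplit : ∀ z : Fin r, phi π c N z =
      (∑ u ∈ Finset.Ioc 0 t, if ((π ^ u) z).val < c then (1/3 : ℚ)^u else 0)
        + ∑ u ∈ Finset.Ioc t N, if ((π ^ u) z).val < c then (1/3 : ℚ)^u else 0 := by
    intro z
    rw [phi, hIcc, Finset.sum_Ioc_consecutive _ (by omega) htN]
  rw [hsplit x, hsplit y]
  have h1 : (∑ u ∈ Finset.Ioc 0 t, ((if ((π ^ u) y).val < c then (1/3 : ℚ)^u else 0)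
      - (if ((π ^ u) x).val < c then (1/3 : ℚ)^u else 0))) = (1/3)^t := by
    rw [Finset.sum_eq_single_of_mem t (by simp [Finset.mem_Ioc]; omega)]
    · simp [hTx, hTy]
    · intro u hu hut
      simp only [Finset.mem_Ioc] at hu
      have := hmid u (by omega) (by omega)
      by_cases hc' : ((π ^ u) x).val < c
      · rw [if_pos hc', if_pos (this.mp hc'), sub_self]
      · rw [if_neg hc', if_neg (fun hh => hc' (this.mpr hh)), sub_self]
  rw [Finset.sum_sub_distrib] at h1
  have h2 : ∀ z : Fin r, |∑ u ∈ Finset.Ioc t N, if ((π ^ u) z).val < c then (1/3 : ℚ)^u else 0|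
      ≤ ∑ u ∈ Finset.Ioc t N, (1/3:ℚ)^u := by
    intro z
    refine (Finset.abs_sum_le_sum_abs _ _).trans (Finset.sum_le_sum fun u _ => ?_)
    by_cases hc' : ((π ^ u) z).val < c
    · rw [if_pos hc', abs_of_nonneg (by positivity)]
    · rw [if_neg hc', abs_zero]; positivity
  have hgeom : 2 * ∑ u ∈ Finset.Ioc t N, (1/3:ℚ)^u < (1/3)^t := by
    rw [← Finset.Icc_add_one_left_eq_Ioc]; exact geom_lt t N
  have hx := abs_le.mp (h2 x)
  have hy := abs_le.mp (h2 y)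
  linarith [hx.2, hy.1]

/-- Monotone-counting helper. -/
private lemma count_aux (g : ℕ → ℕ) (P : ℕ → Prop) [DecidablePred P] (a : ℕ) :
    ∀ n, (∀ ℓ, a ≤ ℓ → ℓ < a + n → g ℓ + (if P ℓ then 1 else 0) ≤ g (ℓ + 1)) →
      g a + ((Finset.Ico a (a + n)).filter P).card ≤ g (a + n) := by
  intro n
  induction n with
  | zero => simp
  | succ n ih =>
    intro h
    have h1 := ih (fun ℓ ha hb => h ℓ ha (by omega))
    have h2 := h (a + n) (by omega) (by omega)
    have hc : ((Finset.Ico a (a + n + 1)).filter P).card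
        = ((Finset.Ico a (a + n)).filter P).card + (if P (a + n) then 1 else 0) := by
      rw [Finset.card_filter, Finset.card_filter, Finset.sum_Ico_succ_top (by omega)]
    have he : a + (n+1) = a + n + 1 := by omega
    rw [he]
    omega

/-- Strict monotonicity from local increase. -/
private lemma strict_aux (F : ℕ → ℚ) (a m : ℕ) (h : ∀ ℓ, a ≤ ℓ → ℓ < m → F ℓ < F (ℓ + 1)) :
    ∀ i j, a ≤ i → i < j → j ≤ m → F i < F j := by
  intro i j hai hij hjm
  induction j with
  | zero => omega
  | succ n ih =>
    rcases Nat.lt_or_ge i n with h' | h'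
    · exact (ih (by omega) (by omega)).trans (h n (by omega) (by omega))
    · have : i = n := by omega
      subst this
      exact h i hai (by omega)

/-- Downward propagation helper. -/
private lemma rev_aux (Q : ℕ → Prop) (a m : ℕ) (hm : Q m)
    (h : ∀ ℓ, a ≤ ℓ → ℓ < m → Q (ℓ + 1) → Q ℓ) : ∀ ℓ, a ≤ ℓ → ℓ ≤ m → Q ℓ := by
  have key : ∀ k ℓ, ℓ + k = m → a ≤ ℓ → Q ℓ := by
    intro k
    induction k with
    | zero =>
      intro ℓ hl _
      have he : ℓ = m := by omega
      rwa [he]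
    | succ k ih =>
      intro ℓ hl ha
      exact h ℓ ha (by omega) (ih (ℓ+1) (by omega) (by omega))
  intro ℓ ha hl
  exact key (m - ℓ) ℓ (by omega) ha


private lemma card_right_le (c d : ℕ) (hd : 0 < d) :
    ((Finset.univ : Finset (Fin (c + d))).filter (fun z => c ≤ z.val)).card ≤ d := by
  have h : ((Finset.univ : Finset (Fin (c + d))).filter (fun z => c ≤ z.val)).card
      ≤ (Finset.univ : Finset (Fin d)).card := by
    apply Finset.card_le_card_of_injOn (fun z => (⟨(z.val - c) % d, Nat.mod_lt _ hd⟩ : Fin d))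
    · intro z _; exact Finset.mem_univ _
    · intro z hz w hw hzw
      simp only [Finset.coe_filter, Set.mem_setOf_eq, Finset.mem_univ, true_and] at hz hw
      have hz2 := z.isLt
      have hw2 := w.isLt
      have hz3 : (z.val - c) % d = z.val - c := Nat.mod_eq_of_lt (by omega)
      have hw3 : (w.val - c) % d = w.val - c := Nat.mod_eq_of_lt (by omega)
      have := congrArg Fin.val hzw
      simp only [hz3, hw3] at this
      exact Fin.ext (by omega)
  simpa using h

private lemma chain_bound (π : Equiv.Perm (Fin r)) (c : ℕ) (γ : ℕ → Fin r) (a n : ℕ)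
    (hr : ((Finset.univ : Finset (Fin r)).filter (fun z => c ≤ z.val)).card ≤ 6)
    (hedge : ∀ ℓ, a ≤ ℓ → ℓ < a + n → (γ ℓ, γ (ℓ + 1)) ∈ Jz0 π c)
    (hend : c ≤ (γ (a + n)).val) :
    ∑ ℓ ∈ Finset.Ico a (a + n), (1/3 : ℚ) ^ (nu π c (γ ℓ, γ (ℓ + 1))) ≤ 17/27 := by
  set tf : ℕ → ℕ := fun ℓ => nu π c (γ ℓ, γ (ℓ + 1)) with htf
  -- structural facts per edge
  have hstr : ∀ ℓ, a ≤ ℓ → ℓ < a + n →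
      1 ≤ tf ℓ ∧ ((π ^ tf ℓ) (γ (ℓ + 1))).val < c ∧ c ≤ ((π ^ tf ℓ) (γ ℓ)).val ∧
        (∀ u, 1 ≤ u → u < tf ℓ → (((π ^ u) (γ ℓ)).val < c ↔ ((π ^ u) (γ (ℓ + 1))).val < c)) ∧
        ((γ ℓ).val < c ↔ (γ (ℓ + 1)).val < c) := by
    intro ℓ h1 h2
    obtain ⟨hp1, hp2, hp3, hp4⟩ := jz0_struct π c (hedge ℓ h1 h2)
    simp only [iter, Jp, Jz, Set.mem_setOf_eq] at hp2 hp3 hp4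
    refine ⟨hp1, hp2.1, hp2.2, fun u hu1 hu2 => ?_, by omega⟩
    have := hp3 u hu1 hu2
    omega
  -- all chain vertices are on the right side
  have hside : ∀ ℓ, a ≤ ℓ → ℓ ≤ a + n → c ≤ (γ ℓ).val := by
    apply rev_aux (fun ℓ => c ≤ (γ ℓ).val) a (a + n) hend
    intro ℓ h1 h2 h3
    have := (hstr ℓ h1 h2).2.2.2.2
    omega
  -- number of edges is at most 5
  have hn5 : n ≤ 5 := by
    have hcard : (Finset.Icc a (a + n)).card ≤ 6 := by
      refine le_trans (Finset.card_le_card_of_injOn γ ?_ ?_) hr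
      · intro ℓ hℓ
        simp only [Finset.mem_coe, Finset.mem_Icc] at hℓ
        simp only [Finset.mem_coe, Finset.mem_filter, Finset.mem_univ, true_and]
        exact hside ℓ hℓ.1 hℓ.2
      · -- injectivity via strictly increasing potential
        set N := (Finset.Ico a (a + n)).sup tf with hN
        have hmono : ∀ ℓ, a ≤ ℓ → ℓ < a + n → phi π c N (γ ℓ) < phi π c N (γ (ℓ + 1)) := by
          intro ℓ h1 h2
          obtain ⟨hs1, hs2, hs3, hs4, _⟩ := hstr ℓ h1 h2
          exact phi_lt π c N (tf ℓ) hs1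
            (Finset.le_sup (Finset.mem_Ico.mpr ⟨h1, h2⟩)) hs4 (by omega) hs2
        intro ℓ₁ hℓ₁ ℓ₂ hℓ₂ heq
        simp only [Finset.coe_Icc, Set.mem_Icc] at hℓ₁ hℓ₂
        by_contra hne
        rcases Nat.lt_or_ge ℓ₁ ℓ₂ with h | h
        · have := strict_aux (fun ℓ => phi π c N (γ ℓ)) a (a + n) hmono ℓ₁ ℓ₂ hℓ₁.1 h hℓ₂.2
          simp only [heq] at this
          exact lt_irrefl _ this
        · have hlt : ℓ₂ < ℓ₁ := by omega
          have := strict_aux (fun ℓ => phi π c N (γ ℓ)) a (a + n) hmono ℓ₂ ℓ₁ hℓ₂.1 hlt hℓ₁.2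
          simp only [heq] at this
          exact lt_irrefl _ this
    rw [Nat.card_Icc] at hcard
    omega
  -- counting edges with small nu
  set g1 : ℕ → ℕ := fun ℓ => if ((π ^ 1) (γ ℓ)).val < c then 1 else 0 with hg1
  set g2 : ℕ → ℕ := fun ℓ => (if ((π ^ 1) (γ ℓ)).val < c then 2 else 0)
    + (if ((π ^ 2) (γ ℓ)).val < c then 1 else 0) with hg2
  have hA : ((Finset.Ico a (a + n)).filter (fun ℓ => tf ℓ = 1)).card ≤ 1 := by
    have hcnt : g1 a + ((Finset.Ico a (a + n)).filter (fun ℓ => tf ℓ = 1)).card ≤ g1 (a + n) := by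
      refine count_aux g1 (fun ℓ => tf ℓ = 1) a n ?_
      intro ℓ h1 h2
      obtain ⟨hs1, hs2, hs3, hs4, _⟩ := hstr ℓ h1 h2
      by_cases h : tf ℓ = 1
      · rw [if_pos h]
        rw [h] at hs2 hs3
        simp only [hg1, if_pos hs2, if_neg (by omega : ¬ ((π ^ 1) (γ ℓ)).val < c)]
        omega
      · rw [if_neg h]
        have := hs4 1 le_rfl (by omega)
        simp only [hg1]
        split <;> split <;> omega
    have hg1n : g1 (a + n) ≤ 1 := by simp only [hg1]; split <;> omega
    omega
  have hD : ((Finset.Ico a (a + n)).filter (fun ℓ => tf ℓ ≤ 2)).card ≤ 3 := by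
    have hcnt : g2 a + ((Finset.Ico a (a + n)).filter (fun ℓ => tf ℓ ≤ 2)).card ≤ g2 (a + n) := by
      refine count_aux g2 (fun ℓ => tf ℓ ≤ 2) a n ?_
      intro ℓ h1 h2
      obtain ⟨hs1, hs2, hs3, hs4, _⟩ := hstr ℓ h1 h2
      rcases Nat.lt_or_ge 2 (tf ℓ) with h | h
      · rw [if_neg (by omega)]
        have e1 := hs4 1 le_rfl (by omega)
        have e2 := hs4 2 (by omega) (by omega)
        simp only [hg2]
        split <;> split <;> split <;> split <;> omega
      · rw [if_pos h]
        rcases (by omega : tf ℓ = 1 ∨ tf ℓ = 2) with h' | h'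
        · rw [h'] at hs2 hs3
          simp only [hg2, if_pos hs2, if_neg (by omega : ¬ ((π ^ 1) (γ ℓ)).val < c)]
          split <;> split <;> omega
        · rw [h'] at hs2 hs3
          have e1 := hs4 1 le_rfl (by omega)
          simp only [hg2, if_pos hs2, if_neg (by omega : ¬ ((π ^ 2) (γ ℓ)).val < c)]
          split <;> split <;> omega
    have hg2n : g2 (a + n) ≤ 3 := by simp only [hg2]; split <;> split <;> omega
    omega
  -- relate the filters
  have hAB : ((Finset.Ico a (a + n)).filter (fun ℓ => tf ℓ = 1)).card
      + ((Finset.Ico a (a + n)).filter (fun ℓ => tf ℓ = 2)).card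
      ≤ ((Finset.Ico a (a + n)).filter (fun ℓ => tf ℓ ≤ 2)).card := by
    rw [← Finset.card_union_of_disjoint]
    · apply Finset.card_le_card
      intro ℓ hℓ
      simp only [Finset.mem_union, Finset.mem_filter] at hℓ ⊢
      rcases hℓ with h | h
      · exact ⟨h.1, by omega⟩
      · exact ⟨h.1, by omega⟩
    · rw [Finset.disjoint_filter]
      intro ℓ _ h1 h2
      omega
  have hC : ((Finset.Ico a (a + n)).filter (fun ℓ => tf ℓ ≤ 2)).card
      + ((Finset.Ico a (a + n)).filter (fun ℓ => 3 ≤ tf ℓ)).card = n := by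
    have hpart : ((Finset.Ico a (a + n)).filter (fun ℓ => tf ℓ ≤ 2)).card
        + ((Finset.Ico a (a + n)).filter (fun ℓ => ¬ tf ℓ ≤ 2)).card
        = (Finset.Ico a (a + n)).card :=
      Finset.card_filter_add_card_filter_not (fun ℓ => tf ℓ ≤ 2)
    rw [Nat.card_Ico] at hpart
    have this := hpart
    have heq : (Finset.Ico a (a + n)).filter (fun ℓ => ¬ tf ℓ ≤ 2)
        = (Finset.Ico a (a + n)).filter (fun ℓ => 3 ≤ tf ℓ) := by
      apply Finset.filter_congr
      intro ℓ _
      constructor <;> (intro hh; omega)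
    rw [heq] at this
    omega
  -- pointwise bound and summation
  have hsum : ∑ ℓ ∈ Finset.Ico a (a + n), (1/3 : ℚ) ^ tf ℓ
      ≤ ∑ ℓ ∈ Finset.Ico a (a + n), ((if tf ℓ = 1 then (1/3 : ℚ) else 0)
        + (if tf ℓ = 2 then (1/9 : ℚ) else 0) + (if 3 ≤ tf ℓ then (1/27 : ℚ) else 0)) := by
    apply Finset.sum_le_sum
    intro ℓ hℓ
    simp only [Finset.mem_Ico] at hℓ
    have hs1 := (hstr ℓ hℓ.1 hℓ.2).1
    rcases (by omega : tf ℓ = 1 ∨ tf ℓ = 2 ∨ 3 ≤ tf ℓ) with h | h | h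
    · rw [h]; norm_num
    · rw [h]; norm_num
    · rw [if_neg (by omega), if_neg (by omega), if_pos h]
      have : (1/3 : ℚ) ^ tf ℓ ≤ (1/3) ^ 3 :=
        pow_le_pow_of_le_one (by norm_num) (by norm_num) h
      norm_num at this ⊢
      linarith
  rw [Finset.sum_add_distrib, Finset.sum_add_distrib] at hsum
  have e1 : ∑ ℓ ∈ Finset.Ico a (a + n), (if tf ℓ = 1 then (1/3 : ℚ) else 0)
      = ((Finset.Ico a (a + n)).filter (fun ℓ => tf ℓ = 1)).card • (1/3 : ℚ) := by
    rw [← Finset.sum_filter, Finset.sum_const]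
  have e2 : ∑ ℓ ∈ Finset.Ico a (a + n), (if tf ℓ = 2 then (1/9 : ℚ) else 0)
      = ((Finset.Ico a (a + n)).filter (fun ℓ => tf ℓ = 2)).card • (1/9 : ℚ) := by
    rw [← Finset.sum_filter, Finset.sum_const]
  have e3 : ∑ ℓ ∈ Finset.Ico a (a + n), (if 3 ≤ tf ℓ then (1/27 : ℚ) else 0)
      = ((Finset.Ico a (a + n)).filter (fun ℓ => 3 ≤ tf ℓ)).card • (1/27 : ℚ) := by
    rw [← Finset.sum_filter, Finset.sum_const]
  rw [e1, e2, e3, nsmul_eq_mul, nsmul_eq_mul, nsmul_eq_mul] at hsum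
  set A := ((Finset.Ico a (a + n)).filter (fun ℓ => tf ℓ = 1)).card
  set B := ((Finset.Ico a (a + n)).filter (fun ℓ => tf ℓ = 2)).card
  set D := ((Finset.Ico a (a + n)).filter (fun ℓ => tf ℓ ≤ 2)).card
  set C := ((Finset.Ico a (a + n)).filter (fun ℓ => 3 ≤ tf ℓ)).card
  have cA : (A : ℚ) ≤ 1 := by exact_mod_cast hA
  have cAB : (A : ℚ) + B ≤ D := by exact_mod_cast hAB
  have cD : (D : ℚ) ≤ 3 := by exact_mod_cast hD
  have cC : (D : ℚ) + C = n := by exact_mod_cast hC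
  have cn : (n : ℚ) ≤ 5 := by exact_mod_cast hn5
  calc ∑ ℓ ∈ Finset.Ico a (a + n), (1/3 : ℚ) ^ tf ℓ
      ≤ A * (1/3) + B * (1/9) + C * (1/27) := hsum
    _ ≤ 17/27 := by linarith

private lemma kappa_eq (π : Equiv.Perm (Fin r)) (c s : ℕ) (γ : ℕ → Fin r) :
    kappa 3 π c s γ = ∑ ℓ ∈ (Finset.Icc 1 (s - 1)).filter
      (fun ℓ => (γ ℓ, γ (ℓ + 1)) ∈ Jz0 π c), (1/3 : ℚ) ^ (nu π c (γ ℓ, γ (ℓ + 1))) := by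
  set tf : ℕ → ℕ := fun ℓ => nu π c (γ ℓ, γ (ℓ + 1)) with htf
  set E := (Finset.Icc 1 (s - 1)).filter (fun ℓ => (γ ℓ, γ (ℓ + 1)) ∈ Jz0 π c) with hE
  have hn : ∀ t, nCount π c s γ t = (E.filter (fun ℓ => tf ℓ = t)).card := by
    intro t
    rw [nCount, ← Set.ncard_coe_finset]
    congr 1
    ext ℓ
    simp only [Set.mem_setOf_eq, Finset.coe_filter, hE, Finset.mem_filter, Finset.mem_Icc]
    tauto
  set T := E.image tf with hT
  have hsupp : (Function.support fun t =>
      if 1 ≤ t then (nCount π c s γ t : ℚ) / ((3 : ℕ) : ℚ) ^ t else 0) ⊆ ↑T := by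
    intro t ht
    simp only [Function.mem_support, ne_eq] at ht
    have hne : nCount π c s γ t ≠ 0 := by
      intro h0
      rw [h0] at ht
      simp at ht
    rw [hn] at hne
    obtain ⟨ℓ, hℓ⟩ := Finset.card_ne_zero.mp hne
    simp only [Finset.mem_filter] at hℓ
    exact Finset.mem_coe.mpr (Finset.mem_image.mpr ⟨ℓ, hℓ.1, hℓ.2⟩)
  rw [kappa, finsum_eq_sum_of_support_subset _ hsupp]
  have hstep : ∀ t ∈ T, (if 1 ≤ t then (nCount π c s γ t : ℚ) / ((3 : ℕ) : ℚ) ^ t else 0)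
      = ∑ ℓ ∈ E.filter (fun ℓ => tf ℓ = t), (1/3 : ℚ) ^ tf ℓ := by
    intro t ht
    obtain ⟨ℓ₀, hℓ₀, hteq⟩ := Finset.mem_image.mp ht
    have hℓ₀' := Finset.mem_filter.mp hℓ₀
    have h1t : 1 ≤ t := hteq ▸ (jz0_struct π c hℓ₀'.2).1
    rw [if_pos h1t, hn]
    have hcg : ∑ ℓ ∈ E.filter (fun ℓ => tf ℓ = t), (1/3 : ℚ) ^ tf ℓ
        = ∑ ℓ ∈ E.filter (fun ℓ => tf ℓ = t), (1/3 : ℚ) ^ t := by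
      refine Finset.sum_congr rfl fun ℓ hℓ => ?_
      rw [(Finset.mem_filter.mp hℓ).2]
    rw [hcg, Finset.sum_const, nsmul_eq_mul]
    push_cast
    rw [div_eq_mul_inv, one_div, inv_pow]
  rw [Finset.sum_congr rfl hstep]
  exact Finset.sum_fiberwise_of_maps_to (fun ℓ hℓ => Finset.mem_image_of_mem tf hℓ) _

end AuxProof

theorem statement_10 (p : ℕ) (hp : p = 3)
    (c d : ℕ) (hc : 0 < c) (hd : 0 < d) (hd6 : d ≤ 6)
    (π : Equiv.Perm (Fin (c + d))) :
    (∀ (s : ℕ) (γ : ℕ → Fin (c + d)), inGamma π c s γ ∨ inDelta π c s γ →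
        kappa p π c s γ < 1) ∧
      kappaPerm p π c < 1 := by
  classical
  subst hp
  have hr6 : ((Finset.univ : Finset (Fin (c + d))).filter (fun z => c ≤ z.val)).card ≤ 6 :=
    le_trans (card_right_le c d hd) hd6
  have main : ∀ (s : ℕ) (γ : ℕ → Fin (c + d)), inGamma π c s γ ∨ inDelta π c s γ →
      kappa 3 π c s γ ≤ 26/27 := by
    intro s γ hγ
    rcases hγ with ⟨hs2, hedges, hlast⟩ | ⟨hs3, ⟨hs2', hedges, hmidl⟩, hlastz⟩
    · -- Γ case
      have hlastp : (γ (s - 1), γ s) ∈ Jp c := hlast.1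
      have hEeq : (Finset.Icc 1 (s - 1)).filter (fun ℓ => (γ ℓ, γ (ℓ + 1)) ∈ Jz0 π c)
          = Finset.Ico 1 (1 + (s - 2)) := by
        ext ℓ
        simp only [Finset.mem_filter, Finset.mem_Icc, Finset.mem_Ico]
        constructor
        · rintro ⟨⟨h1, h2⟩, hz⟩
          refine ⟨h1, ?_⟩
          by_contra hcon
          have hl : ℓ = s - 1 := by omega
          subst hl
          have hss : s - 1 + 1 = s := by omega
          rw [hss] at hz
          have hzz := (jz0_struct π c hz).2.2.2
          simp only [Jz, Jp, Set.mem_setOf_eq] at hzz hlastp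
          omega
        · rintro ⟨h1, h2⟩
          exact ⟨⟨h1, by omega⟩, hedges ℓ h1 (by omega)⟩
      rw [kappa_eq, hEeq]
      have hcb := chain_bound π c γ 1 (s - 2) hr6
        (fun ℓ h1 h2 => hedges ℓ h1 (by omega)) ?_
      · linarith
      · have hss : 1 + (s - 2) = s - 1 := by omega
        rw [hss]
        simp only [Jp, Set.mem_setOf_eq] at hlastp
        exact hlastp.2
    · -- Δ case
      have hmidp : (γ (s - 2), γ (s - 1)) ∈ Jp c := by
        have hm := hmidl.1
        have hss : s - 1 - 1 = s - 2 := by omega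
        rwa [hss] at hm
      have hlz' : (γ (s - 1), γ ((s - 1) + 1)) ∈ Jz0 π c := by
        have hss : s - 1 + 1 = s := by omega
        rwa [hss]
      have hEeq : (Finset.Icc 1 (s - 1)).filter (fun ℓ => (γ ℓ, γ (ℓ + 1)) ∈ Jz0 π c)
          = insert (s - 1) (Finset.Ico 1 (1 + (s - 3))) := by
        ext ℓ
        simp only [Finset.mem_filter, Finset.mem_Icc, Finset.mem_insert, Finset.mem_Ico]
        constructor
        · rintro ⟨⟨h1, h2⟩, hz⟩
          rcases eq_or_ne ℓ (s - 1) with h | h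
          · exact Or.inl h
          · refine Or.inr ⟨h1, ?_⟩
            by_contra hcon
            have hl : ℓ = s - 2 := by omega
            subst hl
            have hss : s - 2 + 1 = s - 1 := by omega
            rw [hss] at hz
            have hzz := (jz0_struct π c hz).2.2.2
            simp only [Jz, Jp, Set.mem_setOf_eq] at hzz hmidp
            omega
        · rintro (h | ⟨h1, h2⟩)
          · subst h
            exact ⟨⟨by omega, le_rfl⟩, hlz'⟩
          · exact ⟨⟨h1, by omega⟩, hedges ℓ h1 (by omega)⟩
      rw [kappa_eq, hEeq]
      have hnotmem : (s - 1) ∉ Finset.Ico 1 (1 + (s - 3)) := by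
        simp only [Finset.mem_Ico]
        omega
      rw [Finset.sum_insert hnotmem]
      have hcb := chain_bound π c γ 1 (s - 3) hr6
        (fun ℓ h1 h2 => hedges ℓ h1 (by omega)) ?_
      · have ht1 : 1 ≤ nu π c (γ (s - 1), γ ((s - 1) + 1)) := (jz0_struct π c hlz').1
        have hterm : (1/3 : ℚ) ^ nu π c (γ (s - 1), γ ((s - 1) + 1)) ≤ (1/3) ^ 1 :=
          pow_le_pow_of_le_one (by norm_num) (by norm_num) ht1
        norm_num at hterm
        linarith
      · have hss : 1 + (s - 3) = s - 2 := by omega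
        rw [hss]
        simp only [Jp, Set.mem_setOf_eq] at hmidp
        exact hmidp.2
  constructor
  · intro s γ hγ
    exact lt_of_le_of_lt (main s γ hγ) (by norm_num)
  · have hsup : kappaPerm 3 π c ≤ 26/27 := by
      apply Real.sSup_le
      · intro x hx
        rcases Set.mem_insert_iff.mp hx with rfl | hxS
        · norm_num
        · obtain ⟨s, γ, hγ, rfl⟩ := hxS
          have hγ' : inGamma π c s γ ∨ inDelta π c s γ := by
            rcases hγ with h | h
            · exact Or.inl h.1
            · exact Or.inr h.1
          have hb := main s γ hγ'
          rw [show ((26:ℝ)/27) = ((26/27 : ℚ) : ℝ) by norm_num]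
          exact_mod_cast hb
      · norm_num
    have : (26 : ℝ)/27 < 1 := by norm_num
    linarith
end PaperPurity
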